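/- If I is a normal Riesz γ-ideal in a GPEA P, then I is a normal Riesz ideal in the γ-unitization U of P iff ∼_I satisfies the condition (GCR) on P: a ∼_I b implies there exist i, j ∈ I with i ⊕ a = j ⊕ b. -/

import Mathlib

open scoped Classical

/-- A generalized pseudo effect algebra: partial orthosummation modeled via `Option`. -/
structure GPEA (P : Type*) where
  oplus : P → P → Option P
  zero : P
  assoc₁ : ∀ {a b c ab s : P}, oplus a b = some ab → oplus ab c = some s →
    ∃ bc, oplus b c = some bc ∧ oplus a bc = some s
  assoc₂ : ∀ {a b c bc s : P}, oplus b c = some bc → oplus a bc = some s →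
    ∃ ab, oplus a b = some ab ∧ oplus ab c = some s
  conj : ∀ {a b s : P}, oplus a b = some s →
    (∃ c, oplus c a = some s) ∧ (∃ d, oplus b d = some s)
  cancel_right : ∀ {a b c s : P}, oplus a c = some s → oplus b c = some s → a = b
  cancel_left : ∀ {a b c s : P}, oplus c a = some s → oplus c b = some s → a = b
  oplus_zero : ∀ a : P, oplus a zero = some a
  zero_oplus : ∀ a : P, oplus zero a = some a
  pos : ∀ {a b : P}, oplus a b = some zero → a = zero ∧ b = zero

namespace GPEA

variable {P Q : Type*}

/-- `a ≤ b` iff there is `c` with `a ⊕ c = b`. -/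
def le (G : GPEA P) (a b : P) : Prop := ∃ c, G.oplus a c = some b

/-- `a ≤ b` (left version) iff there is `d` with `d ⊕ a = b`. -/
def leL (G : GPEA P) (a b : P) : Prop := ∃ d, G.oplus d a = some b

/-- An ideal: a nonempty, downward closed subset closed under existing orthosums. -/
def IsIdeal (G : GPEA P) (I : Set P) : Prop :=
  I.Nonempty ∧ (∀ a ∈ I, ∀ b : P, G.le b a → b ∈ I) ∧
    (∀ a ∈ I, ∀ b ∈ I, ∀ s : P, G.oplus a b = some s → s ∈ I)

/-- A normal ideal: `a ⊕ c = c ⊕ b` implies `a ∈ I ↔ b ∈ I`. -/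
def IsNormalIdeal (G : GPEA P) (I : Set P) : Prop :=
  G.IsIdeal I ∧ ∀ a b c s : P, G.oplus a c = some s → G.oplus c b = some s → (a ∈ I ↔ b ∈ I)

/-- Condition (R1) for an ideal. -/
def R1 (G : GPEA P) (I : Set P) : Prop :=
  ∀ i ∈ I, ∀ a b s : P, G.oplus a b = some s → G.le i s →
    ∃ j ∈ I, ∃ k ∈ I, G.le j a ∧ G.le k b ∧ ∃ t, G.oplus j k = some t ∧ G.le i t

/-- Condition (R2) for an ideal. -/
def R2 (G : GPEA P) (I : Set P) : Prop :=
  ∀ i ∈ I, ∀ a : P, G.le i a →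
    (∀ b x s : P, G.oplus x i = some a → G.oplus x b = some s →
      ∃ j ∈ I, G.le j b ∧ ∀ c, G.oplus j c = some b → ∃ t, G.oplus a c = some t) ∧
    (∀ b y s : P, G.oplus i y = some a → G.oplus b y = some s →
      ∃ k ∈ I, G.le k b ∧ ∀ z, G.oplus z k = some b → ∃ t, G.oplus z a = some t)

/-- A Riesz ideal is an ideal satisfying (R1) and (R2). -/
def IsRieszIdeal (G : GPEA P) (I : Set P) : Prop := G.IsIdeal I ∧ G.R1 I ∧ G.R2 I

/-- A normal Riesz ideal. -/
def IsNormalRieszIdeal (G : GPEA P) (I : Set P) : Prop := G.IsNormalIdeal I ∧ G.R1 I ∧ G.R2 I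

/-- A GPEA-morphism. -/
def IsMorphism (G : GPEA P) (H : GPEA Q) (φ : P → Q) : Prop :=
  ∀ a b s : P, G.oplus a b = some s → H.oplus (φ a) (φ b) = some (φ s)

/-- A unitizing GPEA-automorphism: a GPEA-automorphism `γ` such that
`γa ⊕ b` is defined iff `b ⊕ a` is defined. -/
def IsUnitizing (G : GPEA P) (γ : P → P) : Prop :=
  Function.Bijective γ ∧ G.IsMorphism G γ ∧
    (∀ a b : P, (∃ s, G.oplus (γ a) (γ b) = some s) → ∃ t, G.oplus a b = some t) ∧
    (∀ a b : P, (∃ s, G.oplus (γ a) b = some s) ↔ ∃ t, G.oplus b a = some t)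

/-- A weak congruence. -/
def IsWeakCong (G : GPEA P) (r : P → P → Prop) : Prop :=
  Equivalence r ∧ ∀ a b a₁ b₁ s s₁ : P, G.oplus a b = some s → G.oplus a₁ b₁ = some s₁ →
    r a a₁ → r b b₁ → r s s₁

/-- Condition (C3): a weak congruence satisfying it is a congruence. -/
def C3 (G : GPEA P) (r : P → P → Prop) : Prop :=
  ∀ a b s : P, G.oplus a b = some s →
    (∀ a₁, r a a₁ → ∃ b₁, r b b₁ ∧ ∃ t, G.oplus a₁ b₁ = some t) ∧
    (∀ b₂, r b b₂ → ∃ a₂, r a a₂ ∧ ∃ t, G.oplus a₂ b₂ = some t)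

/-- Condition (C4). -/
def C4 (G : GPEA P) (r : P → P → Prop) : Prop :=
  ∀ a b a₁ b₁ s t : P, r a b →
    ((G.oplus a a₁ = some s ∧ G.oplus b b₁ = some t ∧ r s t) ∨
      (G.oplus a₁ a = some s ∧ G.oplus b₁ b = some t ∧ r s t)) → r a₁ b₁

/-- Condition (C5'). -/
def C5' (G : GPEA P) (r : P → P → Prop) : Prop :=
  ∀ a b c s : P, G.oplus b c = some s → r a s →
    ∃ a₁ a₂, r a₁ b ∧ r a₂ c ∧ G.oplus a₁ a₂ = some a

/-- Condition (CR): here `a \ c` is the unique `x` with `x ⊕ c = a`. -/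
def CR (G : GPEA P) (r : P → P → Prop) : Prop :=
  ∀ a b : P, r a b → ∃ c d : P,
    G.le c a ∧ G.le a d ∧ G.le c b ∧ G.le b d ∧
    (∀ x, G.oplus x c = some a → r x G.zero) ∧
    (∀ x, G.oplus x c = some b → r x G.zero) ∧
    (∀ x, G.oplus x a = some d → r x G.zero) ∧
    (∀ x, G.oplus x b = some d → r x G.zero)

/-- A Riesz congruence: a congruence satisfying (C4), (C5') and (CR). -/
def IsRieszCong (G : GPEA P) (r : P → P → Prop) : Prop :=
  G.IsWeakCong r ∧ G.C3 r ∧ G.C4 r ∧ G.C5' r ∧ G.CR r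

/-- The relation `∼_I` induced by an ideal `I`: `a ∼_I b` iff there are
`i, j ∈ I` with `i ≤ a`, `j ≤ b` and `a \ i = b \ j`. -/
def simI (G : GPEA P) (I : Set P) (a b : P) : Prop :=
  ∃ i ∈ I, ∃ j ∈ I, ∃ d : P, G.oplus d i = some a ∧ G.oplus d j = some b

/-- Condition (GCR) for the relation `∼_I`. -/
def GCR (G : GPEA P) (I : Set P) : Prop :=
  ∀ a b : P, G.simI I a b → ∃ i ∈ I, ∃ j ∈ I, ∃ s, G.oplus i a = some s ∧ G.oplus j b = some s

/-- The Riesz decomposition property. -/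
def RDP (G : GPEA P) : Prop :=
  ∀ a b c d s : P, G.oplus a b = some s → G.oplus c d = some s →
    ∃ e₁₁ e₁₂ e₂₁ e₂₂ : P, G.oplus e₁₁ e₁₂ = some a ∧ G.oplus e₂₁ e₂₂ = some b ∧
      G.oplus e₁₁ e₂₁ = some c ∧ G.oplus e₁₂ e₂₂ = some d

end GPEA

/-- A pseudo effect algebra: a GPEA with a largest element `1`. -/
structure PEA (P : Type*) extends GPEA P where
  one : P
  le_one : ∀ a : P, ∃ c, oplus a c = some one
  le_one' : ∀ a : P, ∃ d, oplus d a = some one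

namespace PEA

variable {P : Type*}

/-- The right supplement `a˜`: the unique element with `a ⊕ a˜ = 1`. -/
noncomputable def rsup (U : PEA P) (a : P) : P := Classical.choose (U.le_one a)

/-- The left supplement `a⁻`: the unique element with `a⁻ ⊕ a = 1`. -/
noncomputable def lsup (U : PEA P) (a : P) : P := Classical.choose (U.le_one' a)

/-- A state on a PEA. -/
def IsState (U : PEA P) (s : P → ℝ) : Prop :=
  (∀ a : P, 0 ≤ s a ∧ s a ≤ 1) ∧ s U.one = 1 ∧
    ∀ a b c : P, U.oplus a b = some c → s c = s a + s b

end PEA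

/-- `U` is a binary unitization of the GPEA `G` via the embedding `ι`. -/
def IsBinaryUnitization {P Q : Type*} (G : GPEA P) (U : PEA Q) (ι : P → Q) : Prop :=
  Function.Injective ι ∧ ι G.zero = U.toGPEA.zero ∧
    (∀ a b : P, U.oplus (ι a) (ι b) = (G.oplus a b).map ι) ∧
    (∀ a : P, U.one ≠ ι a) ∧
    (∀ x y : Q, x ∉ Set.range ι → y ∉ Set.range ι → U.oplus x y = none)

/-- The orthosummation of the `γ`-unitization on `P ⊕ P`
(`Sum.inl a` is `a ∈ P`, `Sum.inr b` is `ηb`). -/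
noncomputable def uop {P : Type*} (G : GPEA P) (γ : P → P) :
    P ⊕ P → P ⊕ P → Option (P ⊕ P)
  | .inl a, .inl b => (G.oplus a b).map .inl
  | .inl a, .inr b => if h : G.leL a b then some (.inr (Classical.choose h)) else none
  | .inr a, .inl b => if h : G.le (γ b) a then some (.inr (Classical.choose h)) else none
  | .inr _, .inr _ => none

/-- A PEA-isomorphism. -/
def IsPEAIso {A B : Type*} (U : PEA A) (V : PEA B) (φ : A → B) : Prop :=
  Function.Bijective φ ∧
    (∀ a b s : A, U.oplus a b = some s → V.oplus (φ a) (φ b) = some (φ s)) ∧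
    (∀ a b : A, (∃ s, V.oplus (φ a) (φ b) = some s) → ∃ t, U.oplus a b = some t) ∧
    φ U.one = V.one

/-- The coordinatewise orthosummation on `I → P`. -/
noncomputable def piOplus {P : Type*} {I : Type*} (G : GPEA P) (f g : I → P) :
    Option (I → P) :=
  if h : ∀ i, ∃ s, G.oplus (f i) (g i) = some s then
    some (fun i => Classical.choose (h i)) else none

/-- The extension `∼*` of a relation on `P` to `P ⊕ P`. -/
def rstar {P : Type*} (r : P → P → Prop) : P ⊕ P → P ⊕ P → Prop
  | .inl a, .inl b => r a b
  | .inr a, .inr b => r a b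
  | _, _ => False

/-!
Write `ηb` for `Sum.inr b`. In the unitization `a ⊕ ηb = ηs` means `s ⊕ a = b`, and `ηb ⊕ a = ηc`
means `γa ⊕ c = b`. Hence (R1) and (R2) for `Sum.inl '' I`, in the cases involving `η`, ask for
statements in `P` where an element has to be traded for a `∼_I`-equivalent one. (GCR) is what makes
this possible: `∼_I`-equivalent elements become equal after adding elements of `I`, and by normality
such ideal summands can be moved to either side. Conversely, (R2) in `U` for `i ≤ d ⊕ i` and
`d ⊕ ηb` produces `f ⊕ a = b ⊕ j` with `j ∈ I`, and normality forces `f ∈ I`: this is (GCR).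
-/

namespace GPEA

variable {P : Type*}

section Order

variable (G : GPEA P)

theorem le_of_oplus_right {a b s : P} (h : G.oplus a b = some s) : G.le b s :=
  (G.conj h).2

theorem exists_oplus_eq_of_le {a b : P} (h : G.le a b) : ∃ c, G.oplus c a = some b :=
  let ⟨_, hc⟩ := h
  (G.conj hc).1

theorem le_trans {a b c : P} (hab : G.le a b) (hbc : G.le b c) : G.le a c := by
  obtain ⟨x, hx⟩ := hab
  obtain ⟨y, hy⟩ := hbc
  obtain ⟨z, -, hz⟩ := G.assoc₁ hx hy
  exact ⟨z, hz⟩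

theorem le_and_forall_of_oplus_right {j c b a : P} (hjc : G.oplus j c = some b)
    (ha : ∃ t, G.oplus a c = some t) :
    G.le j b ∧ ∀ c', G.oplus j c' = some b → ∃ t, G.oplus a c' = some t :=
  ⟨⟨c, hjc⟩, fun _ hc' => G.cancel_left hc' hjc ▸ ha⟩

theorem le_and_forall_of_oplus_left {z k b a : P} (hzk : G.oplus z k = some b)
    (ha : ∃ t, G.oplus z a = some t) :
    G.le k b ∧ ∀ z', G.oplus z' k = some b → ∃ t, G.oplus z' a = some t :=
  ⟨G.le_of_oplus_right hzk, fun _ hz' => G.cancel_right hz' hzk ▸ ha⟩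

end Order

variable {G : GPEA P} {I : Set P}

section Ideal

theorem IsIdeal.mem_of_le (hI : G.IsIdeal I) {a b : P} (hb : b ∈ I) (h : G.le a b) : a ∈ I :=
  hI.2.1 b hb a h

theorem IsIdeal.oplus_mem (hI : G.IsIdeal I) {a b s : P} (ha : a ∈ I) (hb : b ∈ I)
    (h : G.oplus a b = some s) : s ∈ I :=
  hI.2.2 a ha b hb s h

theorem IsIdeal.zero_mem (hI : G.IsIdeal I) : G.zero ∈ I :=
  let ⟨a, ha⟩ := hI.1
  hI.mem_of_le ha ⟨a, G.zero_oplus a⟩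

theorem IsNormalIdeal.mem_iff (hI : G.IsNormalIdeal I) {a b c s : P}
    (h₁ : G.oplus a c = some s) (h₂ : G.oplus c b = some s) : a ∈ I ↔ b ∈ I :=
  hI.2 a b c s h₁ h₂

theorem IsNormalIdeal.exists_mem_oplus_of_oplus_mem (hI : G.IsNormalIdeal I) {i x s : P}
    (hi : i ∈ I) (h : G.oplus x i = some s) : ∃ i' ∈ I, G.oplus i' x = some s :=
  let ⟨c, hc⟩ := (G.conj h).1
  ⟨c, (hI.mem_iff hc h).mpr hi, hc⟩

theorem IsNormalIdeal.exists_oplus_mem_of_mem_oplus (hI : G.IsNormalIdeal I) {i x s : P}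
    (hi : i ∈ I) (h : G.oplus i x = some s) : ∃ i' ∈ I, G.oplus x i' = some s :=
  let ⟨d, hd⟩ := (G.conj h).2
  ⟨d, (hI.mem_iff h hd).mp hi, hd⟩

end Ideal

section Sim

theorem simI.symm {a b : P} (h : G.simI I a b) : G.simI I b a :=
  let ⟨i, hi, j, hj, d, hdi, hdj⟩ := h
  ⟨j, hj, i, hi, d, hdj, hdi⟩

theorem simI_of_oplus (hI : G.IsIdeal I) {d i a : P} (hi : i ∈ I)
    (h : G.oplus d i = some a) : G.simI I a d :=
  ⟨i, hi, G.zero, hI.zero_mem, d, h, G.oplus_zero d⟩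

theorem exists_common_left_part (hR1 : G.R1 I) {d j b c s : P} (hj : j ∈ I)
    (hd : G.oplus d j = some s) (hbc : G.oplus b c = some s) :
    ∃ b₁ p w m, p ∈ I ∧ G.oplus b₁ p = some b ∧ G.oplus b₁ w = some d ∧
      G.oplus w j = some m ∧ G.oplus p c = some m := by
  obtain ⟨p, hp, q, -, hpb, ⟨κ, hqκ⟩, t, hpq, hjt⟩ := hR1 j hj b c s hbc (G.le_of_oplus_right hd)
  obtain ⟨b₁, hb₁⟩ := G.exists_oplus_eq_of_le hpb
  obtain ⟨m, hpc, hb₁m⟩ := G.assoc₁ hb₁ hbc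
  obtain ⟨t', hpq', htκ⟩ := G.assoc₂ hqκ hpc
  obtain rfl : t' = t := Option.some_injective _ (hpq'.symm.trans hpq)
  obtain ⟨τ, hjτ⟩ := hjt
  obtain ⟨_, -, hjm⟩ := G.assoc₁ hjτ htκ
  obtain ⟨w, hwj⟩ := (G.conj hjm).1
  obtain ⟨d', hb₁w, hd'j⟩ := G.assoc₂ hwj hb₁m
  obtain rfl : d = d' := G.cancel_right hd hd'j
  exact ⟨b₁, p, w, m, hp, hb₁, hb₁w, hwj, hpc⟩

theorem simI.trans (hI : G.IsIdeal I) (hR1 : G.R1 I) {a b c : P}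
    (hab : G.simI I a b) (hbc : G.simI I b c) : G.simI I a c := by
  obtain ⟨i, hi, j, hj, d, hdi, hdj⟩ := hab
  obtain ⟨k, hk, l, hl, e, hek, hel⟩ := hbc
  obtain ⟨b₁, p, w, m, hp, hb₁p, hb₁w, hwj, hpk⟩ := exists_common_left_part hR1 hj hdj hek
  have hw : w ∈ I := hI.mem_of_le (hI.oplus_mem hp hk hpk) ⟨j, hwj⟩
  obtain ⟨u, hwi, hb₁u⟩ := G.assoc₁ hb₁w hdi
  obtain ⟨v, hpl, hb₁v⟩ := G.assoc₁ hb₁p hel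
  exact ⟨u, hI.oplus_mem hw hi hwi, v, hI.oplus_mem hp hl hpl, b₁, hb₁u, hb₁v⟩

theorem simI_of_oplus_eq_oplus (hI : G.IsIdeal I) (hR1 : G.R1 I) {a b i j s : P}
    (hi : i ∈ I) (hj : j ∈ I) (ha : G.oplus a i = some s) (hb : G.oplus b j = some s) :
    G.simI I a b :=
  (simI_of_oplus hI hi ha).symm.trans hI hR1 (simI_of_oplus hI hj hb)

/-- Property (C5') of `∼_I`. -/
theorem exists_oplus_simI_of_simI_oplus (hI : G.IsNormalRieszIdeal I) {a b c s : P}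
    (hbc : G.oplus b c = some s) (has : G.simI I a s) :
    ∃ a₁ a₂, G.simI I a₁ b ∧ G.simI I a₂ c ∧ G.oplus a₁ a₂ = some a := by
  obtain ⟨i, hi, j, hj, d, hdi, hdj⟩ := has
  obtain ⟨b₁, p, w, m, hp, hb₁p, hb₁w, hwj, hpc⟩ := exists_common_left_part hI.2.1 hj hdj hbc
  obtain ⟨a₂, hwi, hb₁a₂⟩ := G.assoc₁ hb₁w hdi
  obtain ⟨p', hp', hcp'⟩ := hI.1.exists_oplus_mem_of_mem_oplus hp hpc
  refine ⟨b₁, a₂, (simI_of_oplus hI.1.1 hp hb₁p).symm, ?_, hb₁a₂⟩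
  exact (simI_of_oplus hI.1.1 hi hwi).trans hI.1.1 hI.2.1
    (simI_of_oplus_eq_oplus hI.1.1 hI.2.1 hj hp' hwj hcp')

end Sim

section GCR

theorem GCR.exists_oplus_eq_oplus (hG : G.GCR I) (hI : G.IsNormalIdeal I) {a b : P}
    (h : G.simI I a b) : ∃ i ∈ I, ∃ j ∈ I, ∃ s, G.oplus a i = some s ∧ G.oplus b j = some s := by
  obtain ⟨i, hi, j, hj, s, his, hjs⟩ := hG a b h
  obtain ⟨i', hi', hai'⟩ := hI.exists_oplus_mem_of_mem_oplus hi his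
  obtain ⟨j', hj', hbj'⟩ := hI.exists_oplus_mem_of_mem_oplus hj hjs
  exact ⟨i', hi', j', hj', s, hai', hbj'⟩

theorem GCR.exists_mem_leL_oplus (hG : G.GCR I) (hI : G.IsNormalRieszIdeal I) {i x a b : P}
    (hi : i ∈ I) (hxi : G.oplus x i = some a) (hxb : G.leL x b) :
    ∃ j ∈ I, ∃ s, G.oplus b j = some s ∧ G.leL a s := by
  obtain ⟨e, hex⟩ := hxb
  obtain ⟨φ, hφ, ψ, hψ, w, hφa, hψx⟩ := hG a x (simI_of_oplus hI.1.1 hi hxi)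
  obtain ⟨k, hk, hke, hR2⟩ := (hI.2.2 ψ hψ w ⟨x, hψx⟩).2 e x b hψx hex
  obtain ⟨z, hzk⟩ := G.exists_oplus_eq_of_le hke
  obtain ⟨θ, hzw⟩ := hR2 z hzk
  obtain ⟨_, -, hθa⟩ := G.assoc₂ hφa hzw
  obtain ⟨ψ', hψ', hxψ'⟩ := hI.1.exists_oplus_mem_of_mem_oplus hψ hψx
  obtain ⟨y, hzx, hyψ'⟩ := G.assoc₂ hxψ' hzw
  obtain ⟨_, hkx, hzkx⟩ := G.assoc₁ hzk hex
  obtain ⟨k', hk', hxk'⟩ := hI.1.exists_oplus_mem_of_mem_oplus hk hkx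
  obtain ⟨y', hzx', hy'k'⟩ := G.assoc₂ hxk' hzkx
  obtain rfl : y' = y := Option.some_injective _ (hzx'.symm.trans hzx)
  obtain ⟨α, hα, β, hβ, s, hαθ, hβb⟩ := hG θ b ⟨ψ', hψ', k', hk', y', hyψ', hy'k'⟩
  obtain ⟨_, -, has⟩ := G.assoc₂ hθa hαθ
  obtain ⟨j, hj, hbj⟩ := hI.1.exists_oplus_mem_of_mem_oplus hβ hβb
  exact ⟨j, hj, s, hbj, _, has⟩

theorem GCR.exists_mem_le_oplus (hG : G.GCR I) (hI : G.IsNormalRieszIdeal I) {i x a b : P}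
    (hi : i ∈ I) (hix : G.oplus i x = some a) (hxb : G.le x b) :
    ∃ j ∈ I, ∃ s, G.oplus j b = some s ∧ G.le a s := by
  obtain ⟨c, hxc⟩ := hxb
  obtain ⟨i', hi', hxi'⟩ := hI.1.exists_oplus_mem_of_mem_oplus hi hix
  obtain ⟨φ, hφ, ψ, hψ, w, haφ, hxψ⟩ :=
    hG.exists_oplus_eq_oplus hI.1 (simI_of_oplus hI.1.1 hi' hxi')
  obtain ⟨k, hk, ⟨c', hkc'⟩, hR2⟩ := (hI.2.2 ψ hψ w (G.le_of_oplus_right hxψ)).1 c x b hxψ hxc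
  obtain ⟨θ, hwc'⟩ := hR2 c' hkc'
  obtain ⟨_, -, haθ⟩ := G.assoc₁ haφ hwc'
  obtain ⟨ψ', hψ', hψ'x⟩ := hI.1.exists_mem_oplus_of_oplus_mem hψ hxψ
  obtain ⟨y, hxc', hψ'y⟩ := G.assoc₁ hψ'x hwc'
  obtain ⟨_, hxk, hxkc'⟩ := G.assoc₂ hkc' hxc
  obtain ⟨k', hk', hk'x⟩ := hI.1.exists_mem_oplus_of_oplus_mem hk hxk
  obtain ⟨y', hxc'', hk'y'⟩ := G.assoc₁ hk'x hxkc'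
  obtain rfl : y' = y := Option.some_injective _ (hxc''.symm.trans hxc')
  obtain ⟨ψ'', hψ'', hyψ''⟩ := hI.1.exists_oplus_mem_of_mem_oplus hψ' hψ'y
  obtain ⟨k'', hk'', hyk''⟩ := hI.1.exists_oplus_mem_of_mem_oplus hk' hk'y'
  obtain ⟨α, hα, β, hβ, s, hθα, hbβ⟩ :=
    hG.exists_oplus_eq_oplus hI.1 ⟨ψ'', hψ'', k'', hk'', y', hyψ'', hyk''⟩
  obtain ⟨_, -, has⟩ := G.assoc₁ haθ hθα
  obtain ⟨j, hj, hjb⟩ := hI.1.exists_mem_oplus_of_oplus_mem hβ hbβ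
  exact ⟨j, hj, s, hjb, _, has⟩

/-- (R1) in the unitization for `i ≤ a ⊕ ηb = ηs`. -/
theorem GCR.R1_inl_inr (hG : G.GCR I) (hI : G.IsNormalRieszIdeal I) {i s e a b : P}
    (hi : i ∈ I) (hsi : G.oplus s i = some e) (hsa : G.oplus s a = some b) :
    ∃ j ∈ I, ∃ k ∈ I, G.le j a ∧ (∃ y, G.oplus b k = some y) ∧
      ∃ t, G.oplus j k = some t ∧ G.le i t := by
  obtain ⟨a', ha's⟩ := (G.conj hsa).1
  obtain ⟨k₀, hk₀, ξ, hbk₀, f, hfe⟩ := hG.exists_mem_leL_oplus hI hi hsi ⟨a', ha's⟩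
  obtain ⟨r, her⟩ := (G.conj hfe).2
  obtain ⟨m, hir, hsm⟩ := G.assoc₁ hsi her
  obtain ⟨n, hak₀, hsn⟩ := G.assoc₁ hsa hbk₀
  obtain rfl : m = n := G.cancel_left hsm hsn
  obtain ⟨j, hj, k, hk, hja, ⟨ρ, hkρ⟩, t, hjk, hit⟩ := hI.2.1 i hi a k₀ m hak₀ ⟨r, hir⟩
  obtain ⟨y, hbk, -⟩ := G.assoc₂ hkρ hbk₀
  exact ⟨j, hj, k, hk, hja, ⟨y, hbk⟩, t, hjk, hit⟩

theorem GCR.R1_inl_inr' (hG : G.GCR I) (hI : G.IsNormalRieszIdeal I) {i s e a b : P}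
    (hi : i ∈ I) (his : G.oplus i s = some e) (has : G.oplus a s = some b) :
    ∃ j ∈ I, ∃ k ∈ I, G.le j a ∧ (∃ y, G.oplus k b = some y) ∧
      ∃ t, G.oplus k j = some t ∧ G.le i t := by
  obtain ⟨a', hsa'⟩ := (G.conj has).2
  obtain ⟨κ, hκ, ξ, hκb, he⟩ := hG.exists_mem_le_oplus hI hi his ⟨a', hsa'⟩
  obtain ⟨w, hwe⟩ := G.exists_oplus_eq_of_le he
  obtain ⟨m, hwi, hms⟩ := G.assoc₂ his hwe
  obtain ⟨n, hκa, hns⟩ := G.assoc₂ has hκb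
  obtain rfl : m = n := G.cancel_right hms hns
  obtain ⟨p, hp, q, hq, hpκ, hqa, t, hpq, hit⟩ :=
    hI.2.1 i hi κ a m hκa (G.le_of_oplus_right hwi)
  obtain ⟨κ₁, hκ₁p⟩ := G.exists_oplus_eq_of_le hpκ
  obtain ⟨y, hpb, -⟩ := G.assoc₁ hκ₁p hκb
  exact ⟨q, hq, p, hp, hqa, ⟨y, hpb⟩, t, hpq, hit⟩

end GCR

section Unitizing

variable {γ : P → P}

theorem IsUnitizing.oplus_apply_iff (hγ : G.IsUnitizing γ) {a b c : P} :
    G.oplus (γ a) (γ b) = some (γ c) ↔ G.oplus a b = some c := by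
  refine ⟨fun h => ?_, hγ.2.1 a b c⟩
  obtain ⟨t, ht⟩ := hγ.2.2.1 a b ⟨_, h⟩
  obtain rfl := hγ.1.1 (Option.some_injective _ ((hγ.2.1 a b t ht).symm.trans h))
  exact ht

theorem IsUnitizing.le_apply_iff (hγ : G.IsUnitizing γ) {a b : P} :
    G.le (γ a) (γ b) ↔ G.le a b := by
  refine ⟨fun ⟨c, hc⟩ => ?_, fun ⟨c, hc⟩ => ⟨γ c, hγ.2.1 a c b hc⟩⟩
  obtain ⟨c, rfl⟩ := hγ.1.2 c
  exact ⟨c, hγ.oplus_apply_iff.mp hc⟩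

/-- (R1) in the unitization for `i ≤ ηa ⊕ b = ηs`. -/
theorem GCR.R1_inr_inl (hG : G.GCR I) (hI : G.IsNormalRieszIdeal I) (hγ : G.IsUnitizing γ)
    (hγI : ∀ a, a ∈ I ↔ γ a ∈ I) {i s e a b : P}
    (hi : i ∈ I) (hsi : G.oplus s i = some e) (hbs : G.oplus (γ b) s = some a) :
    ∃ j ∈ I, ∃ k ∈ I, (∃ y, G.oplus a j = some y) ∧ G.le k b ∧
      ∃ t, G.oplus j k = some t ∧ G.le i t := by
  obtain ⟨e', hγis⟩ := (hγ.2.2.2 i s).mpr ⟨e, hsi⟩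
  obtain ⟨k', hk', j', hj', hk'b, ⟨y, hj'a⟩, t', hj'k', hit'⟩ :=
    hG.R1_inl_inr' hI ((hγI i).mp hi) hγis hbs
  obtain ⟨j, rfl⟩ := hγ.1.2 j'
  obtain ⟨k, rfl⟩ := hγ.1.2 k'
  obtain ⟨t, hjk⟩ := hγ.2.2.1 j k ⟨t', hj'k'⟩
  obtain rfl : t' = γ t := Option.some_injective _ (hj'k'.symm.trans (hγ.2.1 j k t hjk))
  exact ⟨j, (hγI j).mpr hj', k, (hγI k).mpr hk', (hγ.2.2.2 j a).mp ⟨y, hj'a⟩,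
    hγ.le_apply_iff.mp hk'b, t, hjk, hγ.le_apply_iff.mp hit'⟩

/-- The first clause of (R2) in the unitization for `i ≤ ηa = ηx ⊕ i` and `ηx ⊕ b = ηs`. -/
theorem R2_inr_inl_left (hI : G.IsNormalRieszIdeal I) (hγ : G.IsUnitizing γ)
    (hγI : ∀ a, a ∈ I ↔ γ a ∈ I) {i a b x s : P} (hi : i ∈ I)
    (hxi : G.oplus (γ i) a = some x) (hxb : G.oplus (γ b) s = some x) :
    ∃ j ∈ I, ∃ c w, G.oplus j c = some b ∧ G.oplus (γ c) w = some a := by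
  obtain ⟨ι, hι, haι⟩ := hI.1.exists_oplus_mem_of_mem_oplus ((hγI i).mp hi) hxi
  obtain ⟨a₁, a₂, ⟨u, -, v, hv, d, hdu, hdv⟩, -, ha₁a₂⟩ :=
    exists_oplus_simI_of_simI_oplus hI hxb (simI_of_oplus hI.1.1 hι haι).symm
  obtain ⟨c, rfl⟩ := hγ.1.2 d
  obtain ⟨v, rfl⟩ := hγ.1.2 v
  obtain ⟨j, hj, hjc⟩ :=
    hI.1.exists_mem_oplus_of_oplus_mem ((hγI v).mpr hv) (hγ.oplus_apply_iff.mp hdv)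
  obtain ⟨w, -, hcw⟩ := G.assoc₁ hdu ha₁a₂
  exact ⟨j, hj, c, w, hjc, hcw⟩

/-- The second clause of (R2) in the unitization for `i ≤ ηa = i ⊕ ηy` and `b ⊕ ηy = ηs`. -/
theorem R2_inr_inl_right (hI : G.IsNormalRieszIdeal I) {i a b y s : P} (hi : i ∈ I)
    (hiy : G.oplus a i = some y) (hby : G.oplus s b = some y) :
    ∃ k ∈ I, ∃ z w, G.oplus z k = some b ∧ G.oplus w z = some a := by
  obtain ⟨a₁, a₂, -, ⟨u, -, k, hk, z, hzu, hzk⟩, ha₁a₂⟩ :=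
    exists_oplus_simI_of_simI_oplus hI hby (simI_of_oplus hI.1.1 hi hiy).symm
  obtain ⟨w, hwz⟩ := G.exists_oplus_eq_of_le (G.le_trans ⟨u, hzu⟩ (G.le_of_oplus_right ha₁a₂))
  exact ⟨k, hk, z, w, hzk, hwz⟩

end Unitizing

section Unitization

variable (G) (γ : P → P)

@[simp]
theorem uop_inl_inl_eq_some_inl {a b s : P} :
    uop G γ (.inl a) (.inl b) = some (.inl s) ↔ G.oplus a b = some s := by
  simp [uop]

@[simp]
theorem uop_inl_inl_ne_some_inr {a b s : P} : uop G γ (.inl a) (.inl b) ≠ some (.inr s) := by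
  simp [uop]

@[simp]
theorem uop_inl_inr_eq_some_inr {a b d : P} :
    uop G γ (.inl a) (.inr b) = some (.inr d) ↔ G.oplus d a = some b := by
  simp only [uop]
  split_ifs with h
  · simp only [Option.some.injEq, Sum.inr.injEq]
    exact ⟨fun hd => hd ▸ Classical.choose_spec h, G.cancel_right (Classical.choose_spec h)⟩
  · simpa using fun hd => h ⟨d, hd⟩

@[simp]
theorem uop_inl_inr_ne_some_inl {a b s : P} : uop G γ (.inl a) (.inr b) ≠ some (.inl s) := by
  simp only [uop]
  split_ifs <;> simp

@[simp]
theorem uop_inr_inl_eq_some_inr {a b c : P} :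
    uop G γ (.inr a) (.inl b) = some (.inr c) ↔ G.oplus (γ b) c = some a := by
  simp only [uop]
  split_ifs with h
  · simp only [Option.some.injEq, Sum.inr.injEq]
    exact ⟨fun hc => hc ▸ Classical.choose_spec h, G.cancel_left (Classical.choose_spec h)⟩
  · simpa using fun hc => h ⟨c, hc⟩

@[simp]
theorem uop_inr_inl_ne_some_inl {a b s : P} : uop G γ (.inr a) (.inl b) ≠ some (.inl s) := by
  simp only [uop]
  split_ifs <;> simp

@[simp]
theorem uop_inr_inr {a b : P} : uop G γ (.inr a) (.inr b) = none := rfl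

variable {G γ} {H : GPEA (P ⊕ P)}

theorem le_inl_inl_iff (hop : H.oplus = uop G γ) {a b : P} :
    H.le (.inl a) (.inl b) ↔ G.le a b := by
  refine ⟨fun ⟨c, hc⟩ => ?_, fun ⟨c, hc⟩ => ⟨.inl c, by simpa [hop]⟩⟩
  rcases c with c | c <;> simp [hop] at hc
  exact ⟨c, hc⟩

theorem le_inl_inr_iff (hop : H.oplus = uop G γ) {a b : P} :
    H.le (.inl a) (.inr b) ↔ ∃ e, G.oplus b a = some e := by
  refine ⟨fun ⟨c, hc⟩ => ?_, fun ⟨c, hc⟩ => ⟨.inr c, by simpa [hop]⟩⟩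
  rcases c with c | c <;> simp [hop] at hc
  exact ⟨c, hc⟩

theorem isNormalIdeal_image_inl (hop : H.oplus = uop G γ) (hI : G.IsNormalIdeal I)
    (hγI : ∀ a, a ∈ I ↔ γ a ∈ I) : H.IsNormalIdeal (Sum.inl '' I) := by
  refine ⟨⟨hI.1.1.image _, ?_, ?_⟩, ?_⟩
  · rintro _ ⟨a, ha, rfl⟩ (x | x) ⟨c | c, hc⟩ <;> simp [hop] at hc
    exact ⟨x, hI.1.mem_of_le ha ⟨c, hc⟩, rfl⟩
  · rintro _ ⟨a, ha, rfl⟩ _ ⟨b, hb, rfl⟩ (s | s) hs <;> simp [hop] at hs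
    exact ⟨s, hI.1.oplus_mem ha hb hs, rfl⟩
  · rintro (a | a) (b | b) (c | c) (s | s) h₁ h₂ <;> simp [hop] at h₁ h₂ ⊢
    · exact hI.mem_iff h₁ h₂
    · exact ((hγI b).trans (hI.mem_iff h₂ h₁)).symm

theorem R1_image_inl (hop : H.oplus = uop G γ) (hI : G.IsNormalRieszIdeal I)
    (hγ : G.IsUnitizing γ) (hγI : ∀ a, a ∈ I ↔ γ a ∈ I) (hG : G.GCR I) :
    H.R1 (Sum.inl '' I) := by
  rintro _ ⟨i, hi, rfl⟩ (a | a) (b | b) (s | s) hab hle <;> simp [hop] at hab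
  · obtain ⟨j, hj, k, hk, hja, hkb, t, hjk, hit⟩ :=
      hI.2.1 i hi a b s hab ((le_inl_inl_iff hop).mp hle)
    exact ⟨.inl j, ⟨j, hj, rfl⟩, .inl k, ⟨k, hk, rfl⟩, (le_inl_inl_iff hop).mpr hja,
      (le_inl_inl_iff hop).mpr hkb, .inl t, by simpa [hop], (le_inl_inl_iff hop).mpr hit⟩
  · obtain ⟨e, hsi⟩ := (le_inl_inr_iff hop).mp hle
    obtain ⟨j, hj, k, hk, hja, hbk, t, hjk, hit⟩ := hG.R1_inl_inr hI hi hsi hab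
    exact ⟨.inl j, ⟨j, hj, rfl⟩, .inl k, ⟨k, hk, rfl⟩, (le_inl_inl_iff hop).mpr hja,
      (le_inl_inr_iff hop).mpr hbk, .inl t, by simpa [hop], (le_inl_inl_iff hop).mpr hit⟩
  · obtain ⟨e, hsi⟩ := (le_inl_inr_iff hop).mp hle
    obtain ⟨j, hj, k, hk, haj, hkb, t, hjk, hit⟩ := hG.R1_inr_inl hI hγ hγI hi hsi hab
    exact ⟨.inl j, ⟨j, hj, rfl⟩, .inl k, ⟨k, hk, rfl⟩, (le_inl_inr_iff hop).mpr haj,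
      (le_inl_inl_iff hop).mpr hkb, .inl t, by simpa [hop], (le_inl_inl_iff hop).mpr hit⟩

theorem R2_image_inl (hop : H.oplus = uop G γ) (hI : G.IsNormalRieszIdeal I)
    (hγ : G.IsUnitizing γ) (hγI : ∀ a, a ∈ I ↔ γ a ∈ I) (hG : G.GCR I) :
    H.R2 (Sum.inl '' I) := by
  rintro _ ⟨i, hi, rfl⟩ (a | a) hle
  · have hia := (le_inl_inl_iff hop).mp hle
    constructor
    · rintro (b | b) (x | x) (s | s) hxi hxb <;> simp [hop] at hxi hxb
      · obtain ⟨j, hj, ⟨c, hjc⟩, hR2⟩ := (hI.2.2 i hi a hia).1 b x s hxi hxb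
        obtain ⟨t, hac⟩ := hR2 c hjc
        exact ⟨.inl j, ⟨j, hj, rfl⟩,
          H.le_and_forall_of_oplus_right (c := .inl c) (by simpa [hop]) ⟨.inl t, by simpa [hop]⟩⟩
      · obtain ⟨j, hj, ξ, hbj, f, hfa⟩ := hG.exists_mem_leL_oplus hI hi hxi ⟨s, hxb⟩
        exact ⟨.inl j, ⟨j, hj, rfl⟩,
          H.le_and_forall_of_oplus_right (c := .inr ξ) (by simpa [hop]) ⟨.inr f, by simpa [hop]⟩⟩
    · rintro (b | b) (y | y) (s | s) hiy hby <;> simp [hop] at hiy hby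
      · obtain ⟨k, hk, hkb, hR2⟩ := (hI.2.2 i hi a hia).2 b y s hiy hby
        obtain ⟨z, hzk⟩ := G.exists_oplus_eq_of_le hkb
        obtain ⟨t, hza⟩ := hR2 z hzk
        exact ⟨.inl k, ⟨k, hk, rfl⟩,
          H.le_and_forall_of_oplus_left (z := .inl z) (by simpa [hop]) ⟨.inl t, by simpa [hop]⟩⟩
      · obtain ⟨κ, hκ, ζ, hκb, w, haw⟩ :=
          hG.exists_mem_le_oplus hI ((hγI i).mp hi) (hγ.2.1 _ _ _ hiy) ⟨s, hby⟩
        obtain ⟨k, rfl⟩ := hγ.1.2 κ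
        exact ⟨.inl k, ⟨k, (hγI k).mpr hκ, rfl⟩,
          H.le_and_forall_of_oplus_left (z := .inr ζ) (by simpa [hop]) ⟨.inr w, by simpa [hop]⟩⟩
  · constructor
    · rintro (b | b) (x | x) (s | s) hxi hxb <;> simp [hop] at hxi hxb
      obtain ⟨j, hj, c, w, hjc, hcw⟩ := R2_inr_inl_left hI hγ hγI hi hxi hxb
      exact ⟨.inl j, ⟨j, hj, rfl⟩,
        H.le_and_forall_of_oplus_right (c := .inl c) (by simpa [hop]) ⟨.inr w, by simpa [hop]⟩⟩
    · rintro (b | b) (y | y) (s | s) hiy hby <;> simp [hop] at hiy hby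
      obtain ⟨k, hk, z, w, hzk, hwz⟩ := R2_inr_inl_right hI hi hiy hby
      exact ⟨.inl k, ⟨k, hk, rfl⟩,
        H.le_and_forall_of_oplus_left (z := .inl z) (by simpa [hop]) ⟨.inr w, by simpa [hop]⟩⟩

theorem GCR_of_R2_image_inl (hop : H.oplus = uop G γ) (hI : G.IsNormalIdeal I)
    (hR2 : H.R2 (Sum.inl '' I)) : G.GCR I := by
  rintro a b ⟨i, hi, j, hj, d, hdi, hdj⟩
  obtain ⟨e, hed⟩ := (G.conj hdj).1
  obtain ⟨_, ⟨k, hk, rfl⟩, hkb, hR2'⟩ :=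
    (hR2 (.inl i) ⟨i, hi, rfl⟩ (.inl a) ((le_inl_inl_iff hop).mpr (G.le_of_oplus_right hdi))).1
      (.inr b) (.inl d) (.inr e) (by simpa [hop]) (by simpa [hop])
  obtain ⟨s, hbk⟩ := (le_inl_inr_iff hop).mp hkb
  obtain ⟨_ | f, hfa⟩ := hR2' (.inr s) (by simpa [hop]) <;> simp [hop] at hfa
  obtain ⟨v, hav⟩ := (G.conj hfa).2
  obtain ⟨m, hiv, hdm⟩ := G.assoc₁ hdi hav
  obtain ⟨m', hjk, hdm'⟩ := G.assoc₁ hdj hbk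
  obtain rfl : m = m' := G.cancel_left hdm hdm'
  have hv : v ∈ I := hI.1.mem_of_le (hI.1.oplus_mem hj hk hjk) (G.le_of_oplus_right hiv)
  obtain ⟨g, hgb⟩ := (G.conj hbk).1
  exact ⟨f, (hI.mem_iff hfa hav).mpr hv, g, (hI.mem_iff hgb hbk).mpr hk, s, hfa, hgb⟩

end Unitization

end GPEA

theorem stmt17_general {P : Type*} (G : GPEA P) (γ : P → P) (hγ : G.IsUnitizing γ)
    (I : Set P) (hI : G.IsNormalRieszIdeal I) (hγI : ∀ a : P, a ∈ I ↔ γ a ∈ I)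
    (U : PEA (P ⊕ P)) (hop : U.toGPEA.oplus = uop G γ) :
    U.toGPEA.IsNormalRieszIdeal (Sum.inl '' I) ↔ G.GCR I :=
  ⟨fun hU => GPEA.GCR_of_R2_image_inl hop hI.1 hU.2.2,
    fun hG => ⟨GPEA.isNormalIdeal_image_inl hop hI.1 hγI, GPEA.R1_image_inl hop hI hγ hγI hG,
      GPEA.R2_image_inl hop hI hγ hγI hG⟩⟩

theorem stmt17 {P : Type*} (G : GPEA P) (γ : P → P) (hγ : G.IsUnitizing γ)
    (I : Set P) (hI : G.IsNormalRieszIdeal I) (hγI : ∀ a : P, a ∈ I ↔ γ a ∈ I)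
    (U : PEA (P ⊕ P)) (hop : U.toGPEA.oplus = uop G γ)
    (hz : U.toGPEA.zero = Sum.inl G.zero) (ho : U.one = Sum.inr G.zero) :
    U.toGPEA.IsNormalRieszIdeal (Sum.inl '' I) ↔ G.GCR I :=
  stmt17_general G γ hγ I hI hγI U hop
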